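/- Let y_1,...,y_N ∈ ℝ^L and define C ∈ ℝ^{NL×NL} by C_{(i,k);(j,l)} = ⟨R_{-k} y_i, R_{-l} y_j⟩. Then there exists a unitary matrix P ∈ ℂ^{NL×NL} such that P C P* is block diagonal with L blocks C_0,...,C_{L-1} ∈ ℂ^{N×N}, where (C_k)_{ij} = L · F(y_i,k) · conj(F(y_j,k)); in particular each block C_k is Hermitian of rank at most 1. -/

import Mathlib

open Finset Matrix

/-- Unitary discrete Fourier transform of a real vector. -/
noncomputable def dftR {L : ℕ} [NeZero L] (x : ZMod L → ℝ) (k : ZMod L) : ℂ :=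
  (1 / Real.sqrt L) * ∑ j : ZMod L, (x j : ℂ) *
    Complex.exp (-(2 * (Real.pi : ℂ) * Complex.I * (j.val : ℂ) * (k.val : ℂ) / (L : ℂ)))

/-!
With `W = dftMatrix L` (so `W *ᵥ f = 𝓕 f`) and `e = stdAddChar`, the correlation matrix
`K a b = ∑ t, f (t + a) * conj (g (t + b))` is a sum over `t` of rank-one matrices built from the
shifts `f (t + ·)` and `g (t + ·)`. The shift theorem `𝓕 (f (t + ·)) k = e (t k) 𝓕 f k` gives
`(W K Wᴴ) k l = (∑ t, e (t (k - l))) 𝓕 f k conj (𝓕 g l)`, and orthogonality of characters turns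
this into `L δ_{kl} 𝓕 f k conj (𝓕 g k)`. The unitary `P = 1 ⊗ₖ (W / √L)` acts on the `(i, j)` block
of `C`, the correlation matrix of `y i` and `y j`, by conjugation with `W / √L`.
-/

open ZMod
open scoped Kronecker

namespace ZMod

variable {L : ℕ} [NeZero L]

lemma sum_stdAddChar_mul (c : ZMod L) :
    ∑ t : ZMod L, stdAddChar (t * c) = if c = 0 then (L : ℂ) else 0 := by
  simpa using AddChar.sum_mulShift c (isPrimitive_stdAddChar L)

lemma star_stdAddChar (a : ZMod L) : star (stdAddChar a) = stdAddChar (-a) := by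
  rw [stdAddChar_apply, stdAddChar_apply, AddChar.map_neg_eq_inv, Circle.coe_inv_eq_conj]
  rfl

lemma stdAddChar_neg_mul (j k : ZMod L) :
    stdAddChar (-(j * k)) =
      Complex.exp (-(2 * (Real.pi : ℂ) * Complex.I * (j.val : ℂ) * (k.val : ℂ) / (L : ℂ))) := by
  have h : -(j * k) = ((-(j.val * k.val : ℤ) : ℤ) : ZMod L) := by
    push_cast
    rw [natCast_zmod_val, natCast_zmod_val]
  rw [h, stdAddChar_coe]
  congr 1
  push_cast
  ring

lemma dft_comp_add_left (f : ZMod L → ℂ) (t k : ZMod L) :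
    𝓕 (fun a ↦ f (t + a)) k = stdAddChar (t * k) * 𝓕 f k := by
  simp only [dft_apply, smul_eq_mul, Finset.mul_sum]
  refine Fintype.sum_equiv (Equiv.addLeft t) _ _ fun a ↦ ?_
  rw [Equiv.coe_addLeft, ← mul_assoc, ← AddChar.map_add_eq_mul]
  congr 2
  ring

noncomputable def dftMatrix (L : ℕ) [NeZero L] : Matrix (ZMod L) (ZMod L) ℂ :=
  of fun k a ↦ stdAddChar (-(a * k))

lemma dftMatrix_mulVec (f : ZMod L → ℂ) : dftMatrix L *ᵥ f = 𝓕 f := by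
  ext k
  simp [dftMatrix, mulVec, dotProduct, dft_apply]

lemma dftMatrix_mul_conjTranspose : dftMatrix L * (dftMatrix L)ᴴ = (L : ℂ) • 1 := by
  ext k l
  simp only [mul_apply, conjTranspose_apply, dftMatrix, of_apply, star_stdAddChar, neg_neg,
    ← AddChar.map_add_eq_mul]
  have h : ∀ a : ZMod L, -(a * k) + a * l = a * (l - k) := fun a ↦ by ring
  simp only [h, sum_stdAddChar_mul, sub_eq_zero, Matrix.smul_apply, one_apply, smul_eq_mul, mul_ite,
    mul_one, mul_zero, eq_comm]

lemma dftMatrix_smul_mem_unitaryGroup :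
    ((Real.sqrt L : ℂ)⁻¹ • dftMatrix L) ∈ unitaryGroup (ZMod L) ℂ := by
  rw [mem_unitaryGroup_iff, star_eq_conjTranspose, conjTranspose_smul, smul_mul_smul_comm,
    dftMatrix_mul_conjTranspose, smul_smul, star_inv₀, Complex.star_def, Complex.conj_ofReal, ← mul_inv, ← Complex.ofReal_mul,
    Real.mul_self_sqrt (Nat.cast_nonneg L), Complex.ofReal_natCast,
    inv_mul_cancel₀ (Nat.cast_ne_zero.mpr (NeZero.ne L)), one_smul]

noncomputable def corrMatrix (f g : ZMod L → ℂ) : Matrix (ZMod L) (ZMod L) ℂ :=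
  of fun a b ↦ ∑ t, f (t + a) * star (g (t + b))

lemma corrMatrix_eq_sum_vecMulVec (f g : ZMod L → ℂ) :
    corrMatrix f g = ∑ t, vecMulVec (fun a ↦ f (t + a)) (star fun b ↦ g (t + b)) := by
  ext a b
  simp [corrMatrix, vecMulVec_apply, Matrix.sum_apply]

lemma dftMatrix_mul_vecMulVec_mul_conjTranspose (u v : ZMod L → ℂ) :
    dftMatrix L * vecMulVec u (star v) * (dftMatrix L)ᴴ = vecMulVec (𝓕 u) (star (𝓕 v)) := by
  rw [mul_vecMulVec, vecMulVec_mul, vecMul_conjTranspose, star_star, dftMatrix_mulVec,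
    dftMatrix_mulVec]

lemma dftMatrix_mul_corrMatrix_mul_conjTranspose (f g : ZMod L → ℂ) :
    dftMatrix L * corrMatrix f g * (dftMatrix L)ᴴ =
      (L : ℂ) • diagonal fun k ↦ 𝓕 f k * star (𝓕 g k) := by
  rw [corrMatrix_eq_sum_vecMulVec, Matrix.mul_sum, Matrix.sum_mul]
  simp_rw [dftMatrix_mul_vecMulVec_mul_conjTranspose]
  ext k l
  have h : ∀ t, stdAddChar (t * k) * 𝓕 f k * star (stdAddChar (t * l) * 𝓕 g l) =
      stdAddChar (t * (k - l)) * (𝓕 f k * star (𝓕 g l)) := fun t ↦ by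
    rw [star_mul', star_stdAddChar, mul_sub, sub_eq_add_neg, AddChar.map_add_eq_mul]
    ring
  simp only [Matrix.sum_apply, vecMulVec_apply, Pi.star_apply, dft_comp_add_left, h,
    ← Finset.sum_mul, sum_stdAddChar_mul, sub_eq_zero, Matrix.smul_apply, diagonal_apply]
  split_ifs with hkl
  · subst hkl; rfl
  · simp

end ZMod

lemma Matrix.one_kronecker_mul_mul_one_kronecker_apply {R ι ι' α α' κ μ : Type*}
    [CommSemiring R]    [Fintype ι] [Fintype ι'] [DecidableEq ι] [DecidableEq ι'] [Fintype α] [Fintype α']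
    (F : Matrix κ α R) (M : Matrix (ι × α) (ι' × α') R) (G : Matrix α' μ R)
    (i : ι) (j : ι') (k : κ) (l : μ) :
    (((1 : Matrix ι ι R) ⊗ₖ F) * M * ((1 : Matrix ι' ι' R) ⊗ₖ G)) (i, k) (j, l) =
      (F * of (fun a b ↦ M (i, a) (j, b)) * G) k l := by
  simp [mul_apply, one_apply, Fintype.sum_prod_type, ite_mul, Finset.sum_mul]

lemma dftR_eq_dft {L : ℕ} [NeZero L] (x : ZMod L → ℝ) (k : ZMod L) :
    dftR x k = (Real.sqrt L : ℂ)⁻¹ * 𝓕 (fun j ↦ (x j : ℂ)) k := by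
  rw [dftR, dft_apply, one_div]
  congr 1
  refine Finset.sum_congr rfl fun j _ ↦ ?_
  rw [smul_eq_mul, stdAddChar_neg_mul, mul_comm]

/-- there is a unitary `P` with `P C P*` block diagonal, with `L`
diagonal blocks `C_k ∈ ℂ^{N×N}`, `(C_k)_{ij} = L ⬝ F(yᵢ,k) conj(F(y_j,k))`;
each block is Hermitian of rank at most 1. -/
theorem stmt3 (N L : ℕ) [NeZero L] (y : Fin N → ZMod L → ℝ)
    (C : Matrix (Fin N × ZMod L) (Fin N × ZMod L) ℝ)
    (hC : ∀ i j : Fin N, ∀ k l : ZMod L,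
      C (i, k) (j, l) = ∑ t : ZMod L, y i (t + k) * y j (t + l))
    (B : ZMod L → Matrix (Fin N) (Fin N) ℂ)
    (hB : ∀ k : ZMod L, ∀ i j : Fin N,
      B k i j = (L : ℂ) * dftR (y i) k * (starRingEnd ℂ) (dftR (y j) k)) :
    (∃ P : Matrix (Fin N × ZMod L) (Fin N × ZMod L) ℂ,
        P ∈ Matrix.unitaryGroup (Fin N × ZMod L) ℂ ∧
        ∀ i j : Fin N, ∀ k l : ZMod L,
          (P * C.map (Complex.ofReal) * Pᴴ) (i, k) (j, l) =
            if k = l then B k i j else 0)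
      ∧ (∀ k : ZMod L, (B k).IsHermitian ∧ (B k).rank ≤ 1) := by
  have hblock : ∀ i j, of (fun a b ↦ C.map Complex.ofReal (i, a) (j, b)) =
      corrMatrix (fun t ↦ (y i t : ℂ)) (fun t ↦ (y j t : ℂ)) := fun i j ↦ by
    ext a b
    simp [corrMatrix, hC]
  refine ⟨⟨1 ⊗ₖ ((Real.sqrt L : ℂ)⁻¹ • dftMatrix L),
    kronecker_mem_unitary (one_mem _) dftMatrix_smul_mem_unitaryGroup, fun i j k l ↦ ?_⟩, fun k ↦ ?_⟩
  · rw [conjTranspose_kronecker, conjTranspose_one, one_kronecker_mul_mul_one_kronecker_apply,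
      hblock, conjTranspose_smul, smul_mul_assoc, smul_mul_smul_comm,
      dftMatrix_mul_corrMatrix_mul_conjTranspose, Matrix.smul_apply, Matrix.smul_apply,
      diagonal_apply]
    split_ifs with hkl
    · subst hkl
      rw [hB, dftR_eq_dft, dftR_eq_dft, map_mul]
      simp only [smul_eq_mul, Complex.star_def]
      ring
    · simp
  · have hBk : B k = vecMulVec (fun i ↦ L * dftR (y i) k) (star fun j ↦ dftR (y j) k) := by
      ext i j
      exact hB k i j
    refine ⟨?_, hBk ▸ rank_vecMulVec_le _ _⟩
    rw [hBk, IsHermitian, conjTranspose_vecMulVec]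
    ext i j
    simp only [vecMulVec_apply, Pi.star_apply, star_star, star_mul', star_natCast]
    ring
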